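/- arXiv:1903.00867 — 3 statements merged into one kernel-verified Lean document; each statement's English description precedes it below -/
import Mathlib

section
/- For a > 0 define v_a : ℝ → ℝ by v_a(x) = 2·arctan(x/a). Let n ≥ 1, let K, L ≥ 0 be natural numbers, let α > 0, β ∈ [0,1), a_1,…,a_K > ０ and b_1,…,b_L > 0, and let μ = (μ_1,…,μ_n) ∈ ℤ^n with μ_1 > μ_2 > … > μ_n. If ξ = (ξ_1,…,ξ_n) ∈ ℝ^n satisfies, for every j ∈ {1,…,n}, the equation α ξ_j + Σ_{k=1}^K v_{a_k}(ξ_j) + Σ_{j′≠j} Σ_{l=1}^L v_{b_l}(ξ_j − ξ_{j′}) = 2π(μ_j + β), then for all 1 ≤ j < j′ ≤ n one has 2π(μ_j − μ_{j′})/(α + κ₋) ≤ ξ_j − ξ_{j′} ≤ 2π(μ_j − μ_{j′})/α, where κ₋ = 2 Σ_{k=1}^K a_k^{−1} + 2n Σ_{l=1}^L b_l^{−1}. -/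
open Real Finset

/-- The rational function `v_a(x) = 2 arctan(x/a)`. -/
noncomputable def vRat (a x : ℝ) : ℝ := 2 * Real.arctan (x / a)

lemma arctan_sub_le_sub {x y : ℝ} (h : x ≤ y) :
    Real.arctan y - Real.arctan x ≤ y - x := by
  have hg : Monotone (fun t : ℝ => t - Real.arctan t) := by
    apply monotone_of_deriv_nonneg
    · exact differentiable_id.sub Real.differentiable_arctan
    · intro t
      have h1 : HasDerivAt (fun t : ℝ => t - Real.arctan t) (1 - 1 / (1 + t ^ 2)) t :=
        (hasDerivAt_id t).sub (Real.hasDerivAt_arctan t)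
      rw [h1.deriv]
      have h2 : 1 / (1 + t ^ 2) ≤ 1 := by
        rw [div_le_one (by positivity)]; nlinarith [sq_nonneg t]
      linarith
  have := hg h
  simp only at this
  linarith

lemma vRat_mono {a : ℝ} (ha : 0 < a) : Monotone (vRat a) := by
  intro x y h
  have h1 : x / a ≤ y / a := by gcongr
  have h2 := Real.arctan_strictMono.monotone h1
  unfold vRat; linarith

lemma vRat_zero (a : ℝ) : vRat a 0 = 0 := by simp [vRat]

lemma vRat_neg (a x : ℝ) : vRat a (-x) = -vRat a x := by
  simp [vRat, neg_div]

lemma vRat_sub_le {a : ℝ} (ha : 0 < a) {x y : ℝ} (h : x ≤ y) :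
    vRat a y - vRat a x ≤ a⁻¹ * (2 * (y - x)) := by
  have h1 : x / a ≤ y / a := by gcongr
  have h2 := arctan_sub_le_sub h1
  have h3 : y / a - x / a = (y - x) / a := by ring
  unfold vRat
  rw [h3] at h2
  have : (y - x) / a = a⁻¹ * (y - x) := by ring
  nlinarith

/-- Rational Bethe bounds of type A: gap estimates for the solutions of the rational
type A critical-point system. -/
theorem ratA_gap_bounds
    (n K L : ℕ) (hn : 1 ≤ n)
    (α β : ℝ) (hα : 0 < α) (hβ0 : 0 ≤ β) (hβ1 : β < 1)
    (a : Fin K → ℝ) (b : Fin L → ℝ)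
    (ha : ∀ k, 0 < a k) (hb : ∀ l, 0 < b l)
    (μ : Fin n → ℤ) (hμ : ∀ j j' : Fin n, j < j' → μ j' < μ j)
    (ξ : Fin n → ℝ)
    (hξ : ∀ j : Fin n,
      α * ξ j + (∑ k, vRat (a k) (ξ j)) +
      (∑ j' ∈ Finset.univ.erase j, ∑ l, vRat (b l) (ξ j - ξ j'))
      = 2 * π * ((μ j : ℝ) + β))
    (κ : ℝ)
    (hκ : κ = 2 * (∑ k, (a k)⁻¹) + 2 * (n : ℝ) * (∑ l, (b l)⁻¹)) :
    ∀ j j' : Fin n, j < j' →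
      2 * π * ((μ j : ℝ) - (μ j' : ℝ)) / (α + κ) ≤ ξ j - ξ j' ∧
      ξ j - ξ j' ≤ 2 * π * ((μ j : ℝ) - (μ j' : ℝ)) / α := by
  intro j j' hjj'
  have hne : j ≠ j' := ne_of_lt hjj'
  have hπ := Real.pi_pos
  have hM : (0:ℝ) < 2 * π * ((μ j : ℝ) - (μ j' : ℝ)) := by
    have h1 : (μ j' : ℝ) < μ j := by exact_mod_cast hμ j j' hjj'
    nlinarith
  -- the set of other indices
  set T : Finset (Fin n) := (Finset.univ.erase j).erase j' with hT
  have hj'mem : j' ∈ Finset.univ.erase j := Finset.mem_erase.2 ⟨hne.symm, Finset.mem_univ _⟩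
  have hjmem : j ∈ Finset.univ.erase j' := Finset.mem_erase.2 ⟨hne, Finset.mem_univ _⟩
  have e1 := hξ j
  have e2 := hξ j'
  rw [← Finset.sum_erase_add _ _ hj'mem] at e1
  rw [← Finset.sum_erase_add _ _ hjmem] at e2
  rw [Finset.erase_right_comm] at e2
  have hvneg : (∑ l, vRat (b l) (ξ j' - ξ j)) = - ∑ l, vRat (b l) (ξ j - ξ j') := by
    rw [← Finset.sum_neg_distrib]
    refine Finset.sum_congr rfl fun l _ => ?_
    rw [← vRat_neg]; ring_nf
  rw [hvneg] at e2
  have key : α * (ξ j - ξ j') + (∑ k, (vRat (a k) (ξ j) - vRat (a k) (ξ j')))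
      + (∑ i ∈ T, ∑ l, (vRat (b l) (ξ j - ξ i) - vRat (b l) (ξ j' - ξ i)))
      + 2 * ∑ l, vRat (b l) (ξ j - ξ j') = 2 * π * ((μ j : ℝ) - (μ j' : ℝ)) := by
    simp only [Finset.sum_sub_distrib]
    linear_combination e1 - e2
  -- positivity of the gap
  have hDpos : 0 < ξ j - ξ j' := by
    by_contra hcon
    push_neg at hcon
    have hle : ξ j ≤ ξ j' := by linarith
    have hA : (∑ k, (vRat (a k) (ξ j) - vRat (a k) (ξ j'))) ≤ 0 :=
      Finset.sum_nonpos fun k _ => sub_nonpos.2 (vRat_mono (ha k) hle)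
    have hS : (∑ i ∈ T, ∑ l, (vRat (b l) (ξ j - ξ i) - vRat (b l) (ξ j' - ξ i))) ≤ 0 :=
      Finset.sum_nonpos fun i _ => Finset.sum_nonpos fun l _ =>
        sub_nonpos.2 (vRat_mono (hb l) (by linarith))
    have hW : (∑ l, vRat (b l) (ξ j - ξ j')) ≤ 0 :=
      Finset.sum_nonpos fun l _ => by
        have := vRat_mono (hb l) (show ξ j - ξ j' ≤ 0 by linarith)
        rwa [vRat_zero] at this
    nlinarith
  have hle' : ξ j' ≤ ξ j := by linarith
  -- nonnegativity of correction terms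
  have hA0 : 0 ≤ (∑ k, (vRat (a k) (ξ j) - vRat (a k) (ξ j'))) :=
    Finset.sum_nonneg fun k _ => sub_nonneg.2 (vRat_mono (ha k) hle')
  have hS0 : 0 ≤ (∑ i ∈ T, ∑ l, (vRat (b l) (ξ j - ξ i) - vRat (b l) (ξ j' - ξ i))) :=
    Finset.sum_nonneg fun i _ => Finset.sum_nonneg fun l _ =>
      sub_nonneg.2 (vRat_mono (hb l) (by linarith))
  have hW0 : 0 ≤ (∑ l, vRat (b l) (ξ j - ξ j')) :=
    Finset.sum_nonneg fun l _ => by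
      have := vRat_mono (hb l) (le_of_lt hDpos)
      rwa [vRat_zero] at this
  constructor
  · -- lower bound
    -- upper bounds on correction terms
    have hA1 : (∑ k, (vRat (a k) (ξ j) - vRat (a k) (ξ j')))
        ≤ (∑ k, (a k)⁻¹) * (2 * (ξ j - ξ j')) := by
      calc (∑ k, (vRat (a k) (ξ j) - vRat (a k) (ξ j')))
          ≤ ∑ k, (a k)⁻¹ * (2 * (ξ j - ξ j')) :=
            Finset.sum_le_sum fun k _ => vRat_sub_le (ha k) hle'
        _ = (∑ k, (a k)⁻¹) * (2 * (ξ j - ξ j')) := by rw [Finset.sum_mul]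
    have hW1 : (∑ l, vRat (b l) (ξ j - ξ j')) ≤ (∑ l, (b l)⁻¹) * (2 * (ξ j - ξ j')) := by
      calc (∑ l, vRat (b l) (ξ j - ξ j'))
          ≤ ∑ l, (b l)⁻¹ * (2 * (ξ j - ξ j')) := Finset.sum_le_sum fun l _ => by
            have := vRat_sub_le (hb l) (show (0:ℝ) ≤ ξ j - ξ j' from le_of_lt hDpos)
            rw [vRat_zero] at this
            simpa using this
        _ = (∑ l, (b l)⁻¹) * (2 * (ξ j - ξ j')) := by rw [Finset.sum_mul]
    have hcard : (T.card : ℝ) = (n : ℝ) - 2 := by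
      have h2n : 2 ≤ n := by
        have := j'.isLt
        have := hjj'
        omega
      have : T.card = n - 2 := by
        rw [hT, Finset.card_erase_of_mem hj'mem, Finset.card_erase_of_mem (Finset.mem_univ j),
          Finset.card_univ, Fintype.card_fin]
        omega
      rw [this]
      push_cast [Nat.cast_sub h2n]
      ring
    have hS1 : (∑ i ∈ T, ∑ l, (vRat (b l) (ξ j - ξ i) - vRat (b l) (ξ j' - ξ i)))
        ≤ ((n : ℝ) - 2) * ((∑ l, (b l)⁻¹) * (2 * (ξ j - ξ j'))) := by
      calc (∑ i ∈ T, ∑ l, (vRat (b l) (ξ j - ξ i) - vRat (b l) (ξ j' - ξ i)))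
          ≤ ∑ i ∈ T, ∑ l, (b l)⁻¹ * (2 * (ξ j - ξ j')) :=
            Finset.sum_le_sum fun i _ => Finset.sum_le_sum fun l _ => by
              have := vRat_sub_le (hb l) (show ξ j' - ξ i ≤ ξ j - ξ i by linarith)
              have heq : (ξ j - ξ i) - (ξ j' - ξ i) = ξ j - ξ j' := by ring
              rw [heq] at this
              exact this
        _ = (T.card : ℝ) * ((∑ l, (b l)⁻¹) * (2 * (ξ j - ξ j'))) := by
            rw [Finset.sum_const, nsmul_eq_mul, Finset.sum_mul]
        _ = ((n : ℝ) - 2) * ((∑ l, (b l)⁻¹) * (2 * (ξ j - ξ j'))) := by rw [hcard]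
    have hκpos : 0 < α + κ := by
      have h1 : (0:ℝ) ≤ ∑ k, (a k)⁻¹ := Finset.sum_nonneg fun k _ => inv_nonneg.2 (ha k).le
      have h2 : (0:ℝ) ≤ ∑ l, (b l)⁻¹ := Finset.sum_nonneg fun l _ => inv_nonneg.2 (hb l).le
      have h3 : (0:ℝ) ≤ (n:ℝ) := Nat.cast_nonneg n
      nlinarith
    rw [div_le_iff₀ hκpos, hκ]
    nlinarith [key, hA1, hS1, hW1]
  · -- upper bound
    rw [le_div_iff₀ hα]
    nlinarith [key]
end

section
/- For r > 0 and σ ∈ {1, −1} define v_{r,σ} : ℝ → ℝ by v_{r,σ}(x) = ∫_0^x sinh(r)/(cosh(r) − σ·cos y) dy. Let n ≥ 1, let K, L ≥ 0 be natural numbers, let α > 0, β ∈ [0,1), r_1,…,r_K > 0, s_1,…,s_L > 0 and σ_1,…,σ_K, τ_1,…,τ_L ∈ {1,−1}, and let μ = (μ_1,…,μ_n) ∈ ℤ^n with μ_1 > μ_2 > … > μ_n. Then there exists a unique ξ = (ξ_1,…,ξ_n) ∈ ℝ^n satisfying, for every j ∈ {1,…,n}, the system α ξ_j + Σ_{k=1}^K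 v_{r_k,σ_k}(ξ_j) + Σ_{j′≠j} Σ_{l=1}^L v_{s_l,τ_l}(ξ_j − ξ_{j′}) = 2π(μ_j + β). -/
/-!
Writing `h = ∑ₖ v_{r_k,σ_k}` and `g = ∑ₗ v_{s_l,τ_l}`, both continuous and monotone, `g` odd, the
system reads `F ξ = c` for `F ξ j = α ξ_j + h ξ_j + ∑_{j'} g (ξ_j - ξ_{j'})`. Oddness of `g`
symmetrises the pair sum, so `⟪F ξ - F η, ξ - η⟫ ≥ α ‖ξ - η‖²` and `F` is injective. `F - c` is the
gradient of a coercive potential, whose global minimum is therefore a solution.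
-/

open Real Finset

noncomputable def vTrig (r σ x : ℝ) : ℝ :=
  ∫ y in (0:ℝ)..x, Real.sinh r / (Real.cosh r - σ * Real.cos y)

open Filter MeasureTheory

lemma two_mul_sum_sum_mul_eq_of_antisymm {ι : Type*} [Fintype ι] (f : ι → ι → ℝ)
    (hf : ∀ a b, f a b = -f b a) (u : ι → ℝ) :
    2 * ∑ a, ∑ b, f a b * u a = ∑ a, ∑ b, f a b * (u a - u b) := by
  have hswap : ∑ a, ∑ b, f a b * u b = -∑ a, ∑ b, f a b * u a := by
    rw [sum_comm, ← sum_neg_distrib]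
    refine sum_congr rfl fun b _ => ?_
    rw [← sum_neg_distrib]
    refine sum_congr rfl fun a _ => ?_
    rw [hf, neg_mul]
  simp only [mul_sub, sum_sub_distrib, hswap]
  ring

lemma Monotone.integral_zero_nonneg {h : ℝ → ℝ} (hh : Monotone h) (h0 : h 0 = 0) (x : ℝ) :
    0 ≤ ∫ t in (0 : ℝ)..x, h t := by
  rcases le_total 0 x with hx | hx
  · exact intervalIntegral.integral_nonneg hx fun t ht => h0 ▸ hh ht.1
  · rw [intervalIntegral.integral_symm, ← intervalIntegral.integral_neg]
    exact intervalIntegral.integral_nonneg hx fun t ht => neg_nonneg.2 (h0 ▸ hh ht.2)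

lemma pi_norm_sq_le_sum_sq {ι : Type*} [Fintype ι] (ξ : ι → ℝ) : ‖ξ‖ ^ 2 ≤ ∑ i, ξ i ^ 2 := by
  have hnorm : ‖ξ‖ ≤ √(∑ i, ξ i ^ 2) :=
    (pi_norm_le_iff_of_nonneg (Real.sqrt_nonneg _)).2 fun i =>
      Real.abs_le_sqrt (single_le_sum (fun j _ => sq_nonneg (ξ j)) (mem_univ i))
  calc ‖ξ‖ ^ 2 ≤ √(∑ i, ξ i ^ 2) ^ 2 := pow_le_pow_left₀ (norm_nonneg _) hnorm 2
    _ = ∑ i, ξ i ^ 2 := Real.sq_sqrt (sum_nonneg fun i _ => sq_nonneg _)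

section Bethe

variable {ι : Type*} [Fintype ι] {α : ℝ} {h g : ℝ → ℝ}

/-- The `j' = j` term is `g 0`, which vanishes for odd `g`. -/
noncomputable def betheMap (α : ℝ) (h g : ℝ → ℝ) (ξ : ι → ℝ) (j : ι) : ℝ :=
  α * ξ j + h (ξ j) + ∑ j', g (ξ j - ξ j')

/-- The paper's Morse function; its gradient is `betheMap α h g - c`. -/
noncomputable def bethePotential (α : ℝ) (h g : ℝ → ℝ) (c ξ : ι → ℝ) : ℝ :=
  ∑ j, (α / 2 * ξ j ^ 2 - c j * ξ j + ∫ t in (0 : ℝ)..ξ j, h t) +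
    1 / 2 * ∑ a, ∑ b, ∫ t in (0 : ℝ)..(ξ a - ξ b), g t

lemma mul_sum_sq_sub_le_betheMap (hh : Monotone h) (hg : Monotone g)
    (hodd : ∀ x, g (-x) = -g x) (ξ η : ι → ℝ) :
    α * ∑ j, (ξ j - η j) ^ 2 ≤
      ∑ j, (betheMap α h g ξ j - betheMap α h g η j) * (ξ j - η j) := by
  have hone : ∀ j, 0 ≤ (h (ξ j) - h (η j)) * (ξ j - η j) := fun j =>
    (hh.monovary monotone_id).sub_mul_sub_nonneg (η j) (ξ j)
  have hpair : 0 ≤ ∑ a, ∑ b, (g (ξ a - ξ b) - g (η a - η b)) * (ξ a - η a) := by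
    have hsym := two_mul_sum_sum_mul_eq_of_antisymm (fun a b => g (ξ a - ξ b) - g (η a - η b))
      (fun a b => by rw [← neg_sub (ξ b), ← neg_sub (η b), hodd, hodd]; ring) (ξ - η)
    have hterm : ∀ a b, 0 ≤ (g (ξ a - ξ b) - g (η a - η b)) * ((ξ - η) a - (ξ - η) b) :=
      fun a b => by
        rw [show (ξ - η) a - (ξ - η) b = (ξ a - ξ b) - (η a - η b) by
          simp only [Pi.sub_apply]; ring]
        exact (hg.monovary monotone_id).sub_mul_sub_nonneg (η a - η b) (ξ a - ξ b)
    have := sum_nonneg fun a (_ : a ∈ univ) =>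
      sum_nonneg fun b (_ : b ∈ univ) => hterm a b
    simp only [Pi.sub_apply] at hsym this
    linarith
  calc α * ∑ j, (ξ j - η j) ^ 2
      ≤ α * ∑ j, (ξ j - η j) ^ 2 + ∑ j, (h (ξ j) - h (η j)) * (ξ j - η j) +
          ∑ a, ∑ b, (g (ξ a - ξ b) - g (η a - η b)) * (ξ a - η a) := by
        linarith [sum_nonneg fun j (_ : j ∈ univ) => hone j]
    _ = ∑ j, (betheMap α h g ξ j - betheMap α h g η j) * (ξ j - η j) := by
        rw [mul_sum, ← sum_add_distrib, ← sum_add_distrib]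
        refine sum_congr rfl fun j _ => ?_
        rw [← sum_mul, sum_sub_distrib, betheMap, betheMap]
        ring

lemma betheMap_injective (hα : 0 < α) (hh : Monotone h) (hg : Monotone g)
    (hodd : ∀ x, g (-x) = -g x) : Function.Injective (betheMap (ι := ι) α h g) := by
  intro ξ η hξη
  have hle := mul_sum_sq_sub_le_betheMap (α := α) hh hg hodd ξ η
  simp only [hξη, sub_self, zero_mul, sum_const_zero] at hle
  have hsq : ∑ j, (ξ j - η j) * (ξ j - η j) = 0 := by
    simp only [← sq]
    exact le_antisymm (nonpos_of_mul_nonpos_right hle hα)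
      (sum_nonneg fun j _ => sq_nonneg _)
  funext j
  exact sub_eq_zero.1 ((sum_mul_self_eq_zero_iff _ _).1 hsq j (mem_univ j))

lemma bethePotential_ge (hα : 0 < α) (hh : Monotone h) (h0 : h 0 = 0) (hg : Monotone g)
    (hodd : ∀ x, g (-x) = -g x) (c ξ : ι → ℝ) :
    α / 4 * ‖ξ‖ ^ 2 - ∑ j, c j ^ 2 / α ≤ bethePotential α h g c ξ := by
  have hg0 : g 0 = 0 := by linarith [neg_zero (G := ℝ) ▸ hodd 0]
  have hone : ∀ j, α / 4 * ξ j ^ 2 - c j ^ 2 / α ≤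
      α / 2 * ξ j ^ 2 - c j * ξ j + ∫ t in (0 : ℝ)..ξ j, h t := fun j => by
    have hsq : 0 ≤ (α * ξ j - 2 * c j) ^ 2 / (4 * α) := by positivity
    have hid : (α * ξ j - 2 * c j) ^ 2 / (4 * α) =
        α / 4 * ξ j ^ 2 - c j * ξ j + c j ^ 2 / α := by
      field_simp; ring
    linarith [hh.integral_zero_nonneg h0 (ξ j)]
  have hpair : 0 ≤ 1 / 2 * ∑ a, ∑ b, ∫ t in (0 : ℝ)..(ξ a - ξ b), g t :=
    mul_nonneg (by norm_num) <| sum_nonneg fun a _ =>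
      sum_nonneg fun b _ => hg.integral_zero_nonneg hg0 _
  calc α / 4 * ‖ξ‖ ^ 2 - ∑ j, c j ^ 2 / α
      ≤ ∑ j, (α / 4 * ξ j ^ 2 - c j ^ 2 / α) := by
        rw [sum_sub_distrib, ← mul_sum]
        gcongr
        exact pi_norm_sq_le_sum_sq ξ
    _ ≤ bethePotential α h g c ξ := by
        unfold bethePotential
        linarith [sum_le_sum fun j (_ : j ∈ univ) => hone j]

lemma tendsto_bethePotential_cocompact (hα : 0 < α) (hh : Monotone h) (h0 : h 0 = 0)
    (hg : Monotone g) (hodd : ∀ x, g (-x) = -g x) (c : ι → ℝ) :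
    Tendsto (bethePotential α h g c) (cocompact (ι → ℝ)) atTop := by
  refine tendsto_atTop_mono (bethePotential_ge hα hh h0 hg hodd c) ?_
  have hquad : Tendsto (fun x : ℝ => α / 4 * x ^ 2 - ∑ j, c j ^ 2 / α) atTop atTop := by
    simp only [sub_eq_add_neg]
    exact tendsto_atTop_add_const_right _ _
      ((tendsto_pow_atTop two_ne_zero).const_mul_atTop (by positivity))
  exact hquad.comp tendsto_norm_cocompact_atTop

lemma continuous_bethePotential (hh : Monotone h) (hg : Monotone g) (c : ι → ℝ) :
    Continuous (bethePotential α h g c) := by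
  have hH := intervalIntegral.continuous_primitive (μ := volume)
    (fun _ _ => hh.intervalIntegrable) 0
  have hG := intervalIntegral.continuous_primitive (μ := volume)
    (fun _ _ => hg.intervalIntegrable) 0
  unfold bethePotential
  fun_prop

lemma hasDerivAt_bethePotential_line (hh : Continuous h) (hg : Continuous g)
    (hodd : ∀ x, g (-x) = -g x) (c ξ d : ι → ℝ) :
    HasDerivAt (fun t : ℝ => bethePotential α h g c (ξ + t • d))
      (∑ j, (betheMap α h g ξ j - c j) * d j) 0 := by
  have hline : ∀ j, HasDerivAt (fun t : ℝ => (ξ + t • d) j) (d j) 0 := fun j => by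
    simpa using ((hasDerivAt_id (0 : ℝ)).mul_const (d j)).const_add (ξ j)
  have hone : ∀ j, HasDerivAt (fun x => α / 2 * x ^ 2 - c j * x + ∫ t in (0 : ℝ)..x, h t)
      (α * ξ j - c j + h (ξ j)) (ξ j) := fun j => by
    refine ((((hasDerivAt_pow 2 (ξ j)).const_mul (α / 2)).fun_sub
      ((hasDerivAt_id' (ξ j)).const_mul (c j))).fun_add
      (hh.integral_hasStrictDerivAt 0 (ξ j)).hasDerivAt).congr_deriv ?_
    push_cast
    ring
  have htwo : ∀ a b, HasDerivAt (fun x => ∫ t in (0 : ℝ)..x, g t) (g (ξ a - ξ b)) (ξ a - ξ b) :=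
    fun a b => (hg.integral_hasStrictDerivAt 0 _).hasDerivAt
  have hsum : HasDerivAt (fun t : ℝ => bethePotential α h g c (ξ + t • d))
      (∑ j, (α * ξ j - c j + h (ξ j)) * d j +
        1 / 2 * ∑ a, ∑ b, g (ξ a - ξ b) * (d a - d b)) 0 :=
    (HasDerivAt.fun_sum (u := univ) fun j _ =>
      (hone j).comp_of_eq 0 (hline j) (by simp)).add
    ((HasDerivAt.fun_sum (u := univ) fun a _ =>
      HasDerivAt.fun_sum (u := univ) fun b _ =>
      (htwo a b).comp_of_eq 0 ((hline a).sub (hline b)) (by simp)).const_mul (1 / 2))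
  refine hsum.congr_deriv ?_
  have hsym := two_mul_sum_sum_mul_eq_of_antisymm (fun a b => g (ξ a - ξ b))
    (fun a b => by rw [← neg_sub, hodd]) d
  simp only [betheMap, sub_mul, add_mul, sum_add_distrib, sum_sub_distrib,
    sum_mul]
  linarith

lemma exists_betheMap_eq (hα : 0 < α) (hhc : Continuous h) (hh : Monotone h) (h0 : h 0 = 0)
    (hgc : Continuous g) (hg : Monotone g) (hodd : ∀ x, g (-x) = -g x) (c : ι → ℝ) :
    ∃ ξ, betheMap α h g ξ = c := by
  obtain ⟨ξ, hmin⟩ := (continuous_bethePotential (α := α) hh hg c).exists_forall_le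
    (tendsto_bethePotential_cocompact hα hh h0 hg hodd c)
  set d := betheMap α h g ξ - c
  have hloc : IsLocalMin (fun t : ℝ => bethePotential α h g c (ξ + t • d)) 0 :=
    Eventually.of_forall fun t => by simpa using hmin (ξ + t • d)
  have hsq : ∑ j, d j * d j = 0 :=
    hloc.hasDerivAt_eq_zero (hasDerivAt_bethePotential_line hhc hgc hodd c ξ d)
  refine ⟨ξ, funext fun j => ?_⟩
  exact sub_eq_zero.1 ((sum_mul_self_eq_zero_iff _ _).1 hsq j (mem_univ j))

lemma betheMap_bijective (hα : 0 < α) (hhc : Continuous h) (hh : Monotone h) (h0 : h 0 = 0)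
    (hgc : Continuous g) (hg : Monotone g) (hodd : ∀ x, g (-x) = -g x) :
    Function.Bijective (betheMap (ι := ι) α h g) :=
  ⟨betheMap_injective hα hh hg hodd, exists_betheMap_eq hα hhc hh h0 hgc hg hodd⟩

end Bethe

section vTrig

variable {r σ : ℝ}

lemma cosh_sub_mul_cos_pos (hr : r ≠ 0) (hσ : |σ| ≤ 1) (y : ℝ) : 0 < cosh r - σ * cos y := by
  have hle : σ * cos y ≤ 1 := (le_abs_self _).trans <| by
    rw [abs_mul]
    exact mul_le_one₀ hσ (abs_nonneg _) (abs_cos_le_one y)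
  linarith [one_lt_cosh.2 hr]

lemma hasDerivAt_vTrig (hr : r ≠ 0) (hσ : |σ| ≤ 1) (x : ℝ) :
    HasDerivAt (vTrig r σ) (sinh r / (cosh r - σ * cos x)) x :=
  (Continuous.integral_hasStrictDerivAt (continuous_const.div (by fun_prop)
    fun y => (cosh_sub_mul_cos_pos hr hσ y).ne') 0 x).hasDerivAt

lemma vTrig_continuous (hr : r ≠ 0) (hσ : |σ| ≤ 1) : Continuous (vTrig r σ) :=
  continuous_iff_continuousAt.2 fun x => (hasDerivAt_vTrig hr hσ x).continuousAt

lemma vTrig_monotone (hr : 0 < r) (hσ : |σ| ≤ 1) : Monotone (vTrig r σ) :=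
  monotone_of_deriv_nonneg (fun x => (hasDerivAt_vTrig hr.ne' hσ x).differentiableAt) fun x =>
    (hasDerivAt_vTrig hr.ne' hσ x).deriv ▸
      (div_pos (sinh_pos_iff.2 hr) (cosh_sub_mul_cos_pos hr.ne' hσ x)).le

lemma vTrig_neg (x : ℝ) : vTrig r σ (-x) = -vTrig r σ x := by
  rw [vTrig, ← neg_zero, ← intervalIntegral.integral_comp_neg]
  simp only [cos_neg, vTrig, intervalIntegral.integral_symm x 0, neg_neg]

end vTrig

theorem trigA_exists_unique_general
    (n K L : ℕ)
    (α β : ℝ) (hα : 0 < α)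
    (r : Fin K → ℝ) (σ : Fin K → ℝ) (s : Fin L → ℝ) (τ : Fin L → ℝ)
    (hr : ∀ k, 0 < r k) (hs : ∀ l, 0 < s l)
    (hσ : ∀ k, σ k = 1 ∨ σ k = -1) (hτ : ∀ l, τ l = 1 ∨ τ l = -1)
    (μ : Fin n → ℤ) :
    ∃! ξ : Fin n → ℝ, ∀ j : Fin n,
      α * ξ j + (∑ k, vTrig (r k) (σ k) (ξ j)) +
      (∑ j' ∈ Finset.univ.erase j, ∑ l, vTrig (s l) (τ l) (ξ j - ξ j'))
      = 2 * π * ((μ j : ℝ) + β) := by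
  have hσ1 : ∀ k, |σ k| ≤ 1 := fun k => by rcases hσ k with e | e <;> simp [e]
  have hτ1 : ∀ l, |τ l| ≤ 1 := fun l => by rcases hτ l with e | e <;> simp [e]
  have hbij := betheMap_bijective (ι := Fin n) hα
    (h := fun x => ∑ k, vTrig (r k) (σ k) x) (g := fun x => ∑ l, vTrig (s l) (τ l) x)
    (continuous_finsetSum _ fun k _ => vTrig_continuous (hr k).ne' (hσ1 k))
    (fun x y hxy => sum_le_sum fun k _ => vTrig_monotone (hr k) (hσ1 k) hxy)
    (by simp [vTrig])
    (continuous_finsetSum _ fun l _ => vTrig_continuous (hs l).ne' (hτ1 l))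
    (fun x y hxy => sum_le_sum fun l _ => vTrig_monotone (hs l) (hτ1 l) hxy)
    (fun x => by simp only [vTrig_neg, sum_neg_distrib])
  refine (existsUnique_congr fun ξ => ?_).1 (hbij.existsUnique fun j => 2 * π * (μ j + β))
  refine funext_iff.trans (forall_congr' fun j => ?_)
  rw [betheMap, ← sum_erase univ (a := j) (by simp [vTrig])]

/-- Existence and uniqueness of the solution of the trigonometric type A Bethe
critical-point system. -/
theorem trigA_exists_unique
    (n K L : ℕ) (hn : 1 ≤ n)
    (α β : ℝ) (hα : 0 < α) (hβ0 : 0 ≤ β) (hβ1 : β < 1)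
    (r : Fin K → ℝ) (σ : Fin K → ℝ) (s : Fin L → ℝ) (τ : Fin L → ℝ)
    (hr : ∀ k, 0 < r k) (hs : ∀ l, 0 < s l)
    (hσ : ∀ k, σ k = 1 ∨ σ k = -1) (hτ : ∀ l, τ l = 1 ∨ τ l = -1)
    (μ : Fin n → ℤ) (hμ : ∀ j j' : Fin n, j < j' → μ j' < μ j) :
    ∃! ξ : Fin n → ℝ, ∀ j : Fin n,
      α * ξ j + (∑ k, vTrig (r k) (σ k) (ξ j)) +
      (∑ j' ∈ Finset.univ.erase j, ∑ l, vTrig (s l) (τ l) (ξ j - ξ j'))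
      = 2 * π * ((μ j : ℝ) + β) :=
  trigA_exists_unique_general n K L α β hα r σ s τ hr hs hσ hτ μ
end

section
/- For a > 0 define v_a : ℝ → ℝ by v_a(x) = 2·arctan(x/a). Let n ≥ 1, let K, L ≥ 0 be natural numbers, let α > 0, β ∈ [0,1), a_1,…,a_K > 0, b_1,…,b_L > 0, and let μ = (μ_1,…,μ_n) ∈ ℤ^n with μ_1 > μ_2 > … > μ_n. Then the function V : ℝ^n → ℝ defined by V(ξ) = Σ_{j=1}^n ( (α/2)ξ_j² − 2π(μ_j+β)ξ_j + Σ_{k=1}^K ∫_0^{ξ_j} v_{a_k}(x) dx ) + Σ_{1≤j<j′≤n} Σ_{l=1}^L ∫_0^{ξ_j−ξ_{j′}} v_{b_l}(x) dx is strictly convex on ℝ^n. -/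
open Real Finset

/-! Each single-coordinate term is the strictly convex `(α/2)ξ²`, minus a linear term, plus
primitives of the increasing functions `v_a`; so it is strictly convex, and a separable sum of
strictly convex functions is strictly convex. Each pair term is a primitive of an increasing
function composed with the linear form `ξ ↦ ξ_j - ξ_j'`, hence convex. -/

theorem ConvexOn.sum {𝕜 E β ι : Type*} [Semiring 𝕜] [PartialOrder 𝕜] [AddCommMonoid E]
    [AddCommMonoid β] [PartialOrder β] [IsOrderedAddMonoid β] [SMul 𝕜 E] [Module 𝕜 β]
    {s : Set E} {t : Finset ι} {f : ι → E → β} (hs : Convex 𝕜 s)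
    (hf : ∀ i ∈ t, ConvexOn 𝕜 s (f i)) :
    ConvexOn 𝕜 s (fun x => ∑ i ∈ t, f i x) := by
  simpa only [← Finset.sum_apply] using
    Finset.sum_induction f (ConvexOn 𝕜 s) (fun _ _ => ConvexOn.add) (convexOn_const 0 hs) hf

theorem StrictConvexOn.const_mul {E : Type*} [AddCommMonoid E] [SMul ℝ E] {s : Set E}
    {f : E → ℝ} {c : ℝ} (hc : 0 < c) (hf : StrictConvexOn ℝ s f) :
    StrictConvexOn ℝ s (fun x => c * f x) := by
  refine ⟨hf.1, fun x hx y hy hxy a b ha hb hab => ?_⟩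
  have := mul_lt_mul_of_pos_left (hf.2 hx hy hxy ha hb hab) hc
  simp only [smul_eq_mul] at this ⊢
  linarith

theorem concaveOn_univ_const_mul (c : ℝ) : ConcaveOn ℝ Set.univ (fun x : ℝ => c * x) :=
  (c • LinearMap.id : ℝ →ₗ[ℝ] ℝ).concaveOn convex_univ

theorem strictConvexOn_univ_sum_apply {ι : Type*} [Fintype ι] {f : ι → ℝ → ℝ}
    (hf : ∀ i, StrictConvexOn ℝ Set.univ (f i)) :
    StrictConvexOn ℝ Set.univ (fun ξ : ι → ℝ => ∑ i, f i (ξ i)) := by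
  refine ⟨convex_univ, fun x _ y _ hxy a b ha hb hab => ?_⟩
  obtain ⟨i₀, hi₀⟩ := Function.ne_iff.mp hxy
  calc ∑ i, f i ((a • x + b • y) i) < ∑ i, (a • f i (x i) + b • f i (y i)) :=
        Finset.sum_lt_sum (fun i _ => (hf i).convexOn.2 trivial trivial ha.le hb.le hab)
          ⟨i₀, mem_univ _, (hf i₀).2 trivial trivial hi₀ ha hb hab⟩
    _ = a • ∑ i, f i (x i) + b • ∑ i, f i (y i) := by
        rw [Finset.sum_add_distrib, Finset.smul_sum, Finset.smul_sum]

theorem ConvexOn.comp_apply_sub_apply {ι : Type*} {g : ℝ → ℝ}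
    (hg : ConvexOn ℝ Set.univ g) (i j : ι) :
    ConvexOn ℝ Set.univ (fun ξ : ι → ℝ => g (ξ i - ξ j)) := by
  have h := hg.comp_linearMap (LinearMap.proj (R := ℝ) (φ := fun _ : ι => ℝ) i - LinearMap.proj j)
  rw [Set.preimage_univ] at h
  exact h

theorem Monotone.convexOn_univ_intervalIntegral {f : ℝ → ℝ} (hf : Monotone f)
    (hc : Continuous f) (a : ℝ) : ConvexOn ℝ Set.univ (fun t => ∫ x in a..t, f x) := by
  have hderiv : ∀ t, HasDerivAt (fun t => ∫ x in a..t, f x) (f t) t := fun t =>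
    (hc.integral_hasStrictDerivAt a t).hasDerivAt
  refine Monotone.convexOn_univ_of_deriv (fun t => (hderiv t).differentiableAt) ?_
  rwa [funext fun t => (hderiv t).deriv]

theorem vRat_monotone {a : ℝ} (ha : 0 ≤ a) : Monotone (vRat a) := fun x y hxy => by
  unfold vRat
  gcongr

theorem continuous_vRat (a : ℝ) : Continuous (vRat a) := by
  unfold vRat
  fun_prop

theorem convexOn_univ_intervalIntegral_vRat {a : ℝ} (ha : 0 ≤ a) :
    ConvexOn ℝ Set.univ (fun t => ∫ x in (0:ℝ)..t, vRat a x) :=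
  (vRat_monotone ha).convexOn_univ_intervalIntegral (continuous_vRat a) 0

theorem ratA_morse_strictConvexOn_general
    (n K L : ℕ)
    (α β : ℝ) (hα : 0 < α)
    (a : Fin K → ℝ) (b : Fin L → ℝ)
    (ha : ∀ k, 0 < a k) (hb : ∀ l, 0 < b l)
    (μ : Fin n → ℤ) :
    StrictConvexOn ℝ Set.univ (fun ξ : Fin n → ℝ =>
      (∑ j, ((α / 2) * ξ j ^ 2 - 2 * π * ((μ j : ℝ) + β) * ξ j +
        ∑ k, ∫ x in (0:ℝ)..(ξ j), vRat (a k) x)) +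
      (∑ j, ∑ j' ∈ Finset.univ.filter (fun j' => j < j'), ∑ l,
        ∫ x in (0:ℝ)..(ξ j - ξ j'), vRat (b l) x)) := by
  have hsq : StrictConvexOn ℝ Set.univ (fun x : ℝ => (α / 2) * x ^ 2) :=
    (Even.strictConvexOn_pow even_two two_ne_zero).const_mul (half_pos hα)
  have hcoord : ∀ j, StrictConvexOn ℝ Set.univ (fun x : ℝ =>
      (α / 2) * x ^ 2 - 2 * π * ((μ j : ℝ) + β) * x + ∑ k, ∫ t in (0:ℝ)..x, vRat (a k) t) :=
    fun j => (hsq.sub_concaveOn (concaveOn_univ_const_mul _)).add_convexOn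
      (ConvexOn.sum convex_univ fun k _ => convexOn_univ_intervalIntegral_vRat (ha k).le)
  have hpair : ∀ j j' : Fin n, ConvexOn ℝ Set.univ (fun ξ : Fin n → ℝ =>
      ∑ l, ∫ x in (0:ℝ)..(ξ j - ξ j'), vRat (b l) x) := fun j j' =>
    ConvexOn.sum convex_univ fun l _ =>
      (convexOn_univ_intervalIntegral_vRat (hb l).le).comp_apply_sub_apply j j'
  exact (strictConvexOn_univ_sum_apply hcoord).add_convexOn
    (ConvexOn.sum convex_univ fun j _ => ConvexOn.sum convex_univ fun j' _ => hpair j j')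

/-- The rational type A Yang–Yang Morse function is strictly convex on `ℝⁿ`. -/
theorem ratA_morse_strictConvexOn
    (n K L : ℕ) (hn : 1 ≤ n)
    (α β : ℝ) (hα : 0 < α) (hβ0 : 0 ≤ β) (hβ1 : β < 1)
    (a : Fin K → ℝ) (b : Fin L → ℝ)
    (ha : ∀ k, 0 < a k) (hb : ∀ l, 0 < b l)
    (μ : Fin n → ℤ) (hμ : ∀ j j' : Fin n, j < j' → μ j' < μ j) :
    StrictConvexOn ℝ Set.univ (fun ξ : Fin n → ℝ =>
      (∑ j, ((α / 2) * ξ j ^ 2 - 2 * π * ((μ j : ℝ) + β) * ξ j +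
        ∑ k, ∫ x in (0:ℝ)..(ξ j), vRat (a k) x)) +
      (∑ j, ∑ j' ∈ Finset.univ.filter (fun j' => j < j'), ∑ l,
        ∫ x in (0:ℝ)..(ξ j - ξ j'), vRat (b l) x)) :=
  ratA_morse_strictConvexOn_general n K L α β hα a b ha hb μ
end
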